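/- arXiv:2504.14763 — 3 statements merged into one kernel-verified Lean document; each statement's English description precedes it below -/
import Mathlib

section
/- If ℓ : (0,1] → (0,∞) is non-decreasing and satisfies ∫₀¹ ℓ(r)|log r|/r dr < ∞, then sup_{u∈(0,1]} u^{-ℓ(u)} < ∞. -/
/-!
By monotonicity, `∫_u^1 ℓ(r)|log r|/r dr ≥ ℓ(u) ∫_u^1 |log r|/r dr = ℓ(u) (log u)² / 2`, so
`ℓ(u) (log u)²` is bounded by twice the Dini integral (of `|ℓ(r) log r / r|`). Since
`-log u ≤ max 1 (log u)²`, the exponent `ℓ(u)·(-log u)` of `u^{-ℓ(u)}` is then bounded by that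
constant or by `ℓ(1)`.
-/

open MeasureTheory Set Real

theorem integral_log_div_self {a b : ℝ} (ha : 0 < a) (hb : 0 < b) :
    ∫ x in a..b, log x / x = (log b ^ 2 - log a ^ 2) / 2 := by
  have hne : ∀ x ∈ uIcc a b, x ≠ 0 := fun x hx => (lt_min ha hb |>.trans_le hx.1).ne'
  have hderiv : ∀ x ∈ uIcc a b, HasDerivAt (fun x => log x ^ 2 / 2) (log x / x) x :=
    fun x hx => (((hasDerivAt_log (hne x hx)).fun_pow 2).div_const 2).congr_deriv
      (by field_simp; ring)
  have hcont : ContinuousOn (fun x => log x / x) (uIcc a b) :=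
    (continuousOn_log.mono hne).div continuousOn_id hne
  rw [intervalIntegral.integral_eq_sub_of_hasDerivAt hderiv hcont.intervalIntegrable]
  ring

theorem mul_log_sq_div_two_le_setIntegral {ℓ : ℝ → ℝ} {u : ℝ} (hu₀ : 0 < u) (hu₁ : u ≤ 1)
    (hmono : MonotoneOn ℓ (Icc u 1))
    (hint : IntegrableOn (fun r => ℓ r * |log r| / r) (Ioc u 1)) :
    ℓ u * log u ^ 2 / 2 ≤ ∫ r in Ioc u 1, ℓ r * |log r| / r := by
  have hweight : ∫ r in Ioc u 1, -log r / r = log u ^ 2 / 2 := by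
    rw [← intervalIntegral.integral_of_le hu₁]
    simp only [neg_div, intervalIntegral.integral_neg, integral_log_div_self hu₀ one_pos, log_one]
    ring
  have hweight_int : IntegrableOn (fun r => ℓ u * (-log r / r)) (Ioc u 1) := by
    refine Integrable.const_mul ?_ _
    refine (ContinuousOn.integrableOn_Icc ?_).mono_set Ioc_subset_Icc_self
    have hne : ∀ x ∈ Icc u 1, x ≠ 0 := fun x hx => (hu₀.trans_le hx.1).ne'
    exact ((continuousOn_log.mono hne).neg).div continuousOn_id hne
  calc ℓ u * log u ^ 2 / 2 = ∫ r in Ioc u 1, ℓ u * (-log r / r) := by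
        rw [integral_const_mul, hweight]; ring
    _ ≤ ∫ r in Ioc u 1, ℓ r * |log r| / r := by
        refine setIntegral_mono_on hweight_int hint measurableSet_Ioc fun r hr => ?_
        have hr₀ : 0 < r := hu₀.trans hr.1
        rw [abs_of_nonpos (log_nonpos hr₀.le hr.2), mul_div_assoc]
        exact mul_le_mul_of_nonneg_right
          (hmono ⟨le_rfl, hu₁⟩ (Ioc_subset_Icc_self hr) hr.1.le)
          (div_nonneg (neg_nonneg.mpr (log_nonpos hr₀.le hr.2)) hr₀.le)

theorem mul_le_max_of_mul_sq_le {a b c x : ℝ} (hx : 0 ≤ x) (hab : a ≤ b) (hc : 0 ≤ c)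
    (hac : a * x ^ 2 ≤ c) : a * x ≤ max b c := by
  rcases le_total a 0 with ha | ha
  · exact (mul_nonpos_of_nonpos_of_nonneg ha hx).trans (hc.trans (le_max_right _ _))
  rcases le_total x 1 with hx₁ | hx₁
  · exact le_max_of_le_left (by nlinarith)
  · exact le_max_of_le_right (by nlinarith)

theorem sup_rpow_neg_ell_lt_top_general (ℓ : ℝ → ℝ)
    (hmono : MonotoneOn ℓ (Ioc (0:ℝ) 1))
    (hint : IntegrableOn (fun r => ℓ r * |Real.log r| / r) (Ioc (0:ℝ) 1)) :
    ∃ C : ℝ, ∀ u ∈ Ioc (0:ℝ) 1, u ^ (-(ℓ u)) ≤ C := by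
  set J := ∫ r in Ioc (0:ℝ) 1, |ℓ r * |log r| / r|
  refine ⟨exp (max (ℓ 1) (2 * J)), fun u ⟨hu₀, hu₁⟩ => ?_⟩
  have hsub : Ioc u 1 ⊆ Ioc 0 1 := Ioc_subset_Ioc_left hu₀.le
  have hsq : ℓ u * log u ^ 2 ≤ 2 * J := by
    have hint_u := hint.mono_set hsub
    have hlower := mul_log_sq_div_two_le_setIntegral hu₀ hu₁
      (hmono.mono (Icc_subset_Ioc hu₀ le_rfl)) hint_u
    have habs : ∫ r in Ioc u 1, ℓ r * |log r| / r ≤ J :=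
      calc _ ≤ ∫ r in Ioc u 1, |ℓ r * |log r| / r| :=
            integral_mono hint_u hint_u.abs fun r => le_abs_self _
        _ ≤ J := setIntegral_mono_set hint.abs (ae_of_all _ fun r => abs_nonneg _)
            hsub.eventuallyLE
    linarith
  rw [rpow_def_of_pos hu₀, exp_le_exp, mul_comm, neg_mul_comm]
  exact mul_le_max_of_mul_sq_le (neg_nonneg.mpr (log_nonpos hu₀.le hu₁))
    (hmono ⟨hu₀, hu₁⟩ ⟨one_pos, le_rfl⟩ hu₁)
    (mul_nonneg zero_le_two (integral_nonneg fun r => abs_nonneg _)) (by rwa [neg_sq])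

theorem sup_rpow_neg_ell_lt_top (ℓ : ℝ → ℝ)
    (hpos : ∀ r ∈ Ioc (0:ℝ) 1, 0 < ℓ r)
    (hmono : MonotoneOn ℓ (Ioc (0:ℝ) 1))
    (hint : IntegrableOn (fun r => ℓ r * |Real.log r| / r) (Ioc (0:ℝ) 1)) :
    ∃ C : ℝ, ∀ u ∈ Ioc (0:ℝ) 1, u ^ (-(ℓ u)) ≤ C :=
  sup_rpow_neg_ell_lt_top_general ℓ hmono hint
end

section
/- Let f : (0,1] → (0,∞) be non-decreasing with ∫₀¹ f(r)/r dr < ∞ (a Dini function), and fix ε ∈ (0,1). Define f_ε(r) := inf_{s∈(0,1]} { f(s) + f(1)(r/s)^ε } for r ∈ (0,1]. Then (i) f(r) ≤ f_ε(r) for all r ∈ (0,1], (ii) r ↦ f_ε(r)/r^ε is non-increasing on (0,1], and (iii) ∫₀¹ f_ε(r)/r dr < ∞. -/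
/-! Each function `r ↦ f s + f 1 * (r / s) ^ ε` is non-decreasing in `r` and becomes
non-increasing after division by `r ^ ε`; both properties pass to the infimum `f_ε`. The term
with `s ≥ r` dominates `f r` by monotonicity, and for `s < r` the second summand is at least
`f 1 ≥ f r`, so `f ≤ f_ε`. Choosing `s = √r` gives `f_ε r ≤ f √r + f 1 * r ^ (ε / 2)`, and the
substitution `r = u ^ 2` turns `∫₀¹ f √r / r dr` into `2 ∫₀¹ f u / u du`. -/

open MeasureTheory Set

noncomputable def diniRegularization (f : ℝ → ℝ) (ε r : ℝ) : ℝ :=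
  sInf ((fun s => f s + f 1 * (r / s) ^ ε) '' Ioc 0 1)

theorem integrableOn_comp_sqrt_div {g : ℝ → ℝ}
    (hg : IntegrableOn (fun r => g r / r) (Ioc 0 1)) :
    IntegrableOn (fun r => g √r / r) (Ioc 0 1) := by
  have himage : (fun u : ℝ => u ^ 2) '' Ioc 0 1 = Ioc 0 1 := by
    ext x
    constructor
    · rintro ⟨u, hu, rfl⟩
      exact ⟨by positivity [hu.1], pow_le_one₀ hu.1.le hu.2⟩
    · exact fun hx => ⟨√x, ⟨Real.sqrt_pos.mpr hx.1, Real.sqrt_le_one.mpr hx.2⟩,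
        Real.sq_sqrt hx.1.le⟩
  have hinj : InjOn (fun u : ℝ => u ^ 2) (Ioc 0 1) :=
    fun a ha b hb h => (pow_left_inj₀ ha.1.le hb.1.le two_ne_zero).mp h
  rw [← himage, integrableOn_image_iff_integrableOn_abs_deriv_smul measurableSet_Ioc
    (fun x _ => (hasDerivAt_pow 2 x).hasDerivWithinAt) hinj]
  refine IntegrableOn.congr_fun (hg.const_mul 2) (fun u hu => ?_) measurableSet_Ioc
  have hu0 : 0 < u := hu.1
  simp only [smul_eq_mul, Real.sqrt_sq hu0.le]
  rw [abs_of_pos (by positivity)]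
  field_simp
  ring

section

variable {f : ℝ → ℝ} {ε r : ℝ}

theorem le_diniRegularization {c : ℝ}
    (h : ∀ s ∈ Ioc (0:ℝ) 1, c ≤ f s + f 1 * (r / s) ^ ε) :
    c ≤ diniRegularization f ε r :=
  le_csInf ⟨_, mem_image_of_mem _ (right_mem_Ioc.mpr one_pos)⟩
    (by rintro _ ⟨s, hs, rfl⟩; exact h s hs)

theorem nonneg_of_mem_diniRegularization_image (hf : ∀ r ∈ Ioc (0:ℝ) 1, 0 ≤ f r)
    (hr : 0 ≤ r) : ∀ x ∈ (fun s => f s + f 1 * (r / s) ^ ε) '' Ioc 0 1, 0 ≤ x := by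
  rintro _ ⟨s, hs, rfl⟩
  exact add_nonneg (hf s hs) <| mul_nonneg (hf 1 (right_mem_Ioc.mpr one_pos)) <|
    Real.rpow_nonneg (div_nonneg hr hs.1.le) ε

theorem diniRegularization_nonneg (hf : ∀ r ∈ Ioc (0:ℝ) 1, 0 ≤ f r) (hr : 0 ≤ r) :
    0 ≤ diniRegularization f ε r :=
  Real.sInf_nonneg (nonneg_of_mem_diniRegularization_image hf hr)

theorem diniRegularization_le (hf : ∀ r ∈ Ioc (0:ℝ) 1, 0 ≤ f r) {s : ℝ} (hr : 0 ≤ r)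
    (hs : s ∈ Ioc (0:ℝ) 1) : diniRegularization f ε r ≤ f s + f 1 * (r / s) ^ ε :=
  csInf_le ⟨0, nonneg_of_mem_diniRegularization_image hf hr⟩ (mem_image_of_mem _ hs)

theorem self_le_diniRegularization (hf : ∀ r ∈ Ioc (0:ℝ) 1, 0 ≤ f r)
    (hmono : MonotoneOn f (Ioc 0 1)) (hε : 0 ≤ ε) (hr : r ∈ Ioc (0:ℝ) 1) :
    f r ≤ diniRegularization f ε r := by
  have h1 : (1:ℝ) ∈ Ioc 0 1 := right_mem_Ioc.mpr one_pos
  refine le_diniRegularization fun s hs => ?_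
  have hpow : 0 ≤ f 1 * (r / s) ^ ε :=
    mul_nonneg (hf 1 h1) (Real.rpow_nonneg (div_nonneg hr.1.le hs.1.le) ε)
  rcases le_or_gt r s with hrs | hsr
  · linarith [hmono hr hs hrs]
  · have : 1 ≤ (r / s) ^ ε := Real.one_le_rpow ((one_le_div hs.1).mpr hsr.le) hε
    calc f r ≤ f 1 := hmono hr h1 hr.2
      _ ≤ f 1 * (r / s) ^ ε := le_mul_of_one_le_right (hf 1 h1) this
      _ ≤ f s + f 1 * (r / s) ^ ε := le_add_of_nonneg_left (hf s hs)

theorem monotoneOn_diniRegularization (hf : ∀ r ∈ Ioc (0:ℝ) 1, 0 ≤ f r) (hε : 0 ≤ ε) :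
    MonotoneOn (diniRegularization f ε) (Ici 0) := by
  intro r (hr : 0 ≤ r) r' _ hrr'
  refine le_diniRegularization fun s hs => (diniRegularization_le hf hr hs).trans ?_
  have := hf 1 (right_mem_Ioc.mpr one_pos)
  have := hs.1
  gcongr

theorem antitoneOn_diniRegularization_div_rpow (hf : ∀ r ∈ Ioc (0:ℝ) 1, 0 ≤ f r)
    (hε : 0 ≤ ε) : AntitoneOn (fun r => diniRegularization f ε r / r ^ ε) (Ioi 0) := by
  intro r (hr : 0 < r) r' (hr' : 0 < r') hrr'
  have hc : r ^ ε / r' ^ ε ≤ 1 :=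
    div_le_one_of_le₀ (Real.rpow_le_rpow hr.le hrr' hε) (by positivity)
  have key : diniRegularization f ε r' * (r ^ ε / r' ^ ε) ≤ diniRegularization f ε r := by
    refine le_diniRegularization fun s hs => ?_
    have hscale : (r' / s) ^ ε * (r ^ ε / r' ^ ε) = (r / s) ^ ε := by
      rw [Real.div_rpow hr'.le hs.1.le, Real.div_rpow hr.le hs.1.le]
      field_simp
    calc _ ≤ (f s + f 1 * (r' / s) ^ ε) * (r ^ ε / r' ^ ε) := by
          gcongr; exact diniRegularization_le hf hr'.le hs
      _ = f s * (r ^ ε / r' ^ ε) + f 1 * (r / s) ^ ε := by rw [← hscale]; ring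
      _ ≤ f s + f 1 * (r / s) ^ ε := by gcongr; exact mul_le_of_le_one_right (hf s hs) hc
  calc diniRegularization f ε r' / r' ^ ε
      = diniRegularization f ε r' * (r ^ ε / r' ^ ε) / r ^ ε := by field_simp
    _ ≤ diniRegularization f ε r / r ^ ε := by gcongr

theorem diniRegularization_le_sqrt (hf : ∀ r ∈ Ioc (0:ℝ) 1, 0 ≤ f r)
    (hr : r ∈ Ioc (0:ℝ) 1) : diniRegularization f ε r ≤ f √r + f 1 * r ^ (ε / 2) := by
  have hs : √r ∈ Ioc (0:ℝ) 1 := ⟨Real.sqrt_pos.mpr hr.1, Real.sqrt_le_one.mpr hr.2⟩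
  have hsqrt : √r ^ ε = r ^ (ε / 2) := by
    rw [Real.sqrt_eq_rpow, ← Real.rpow_mul hr.1.le, one_div_mul_eq_div]
  simpa only [Real.div_sqrt, hsqrt] using diniRegularization_le (ε := ε) hf hr.1.le hs

theorem integrableOn_diniRegularization_div (hf : ∀ r ∈ Ioc (0:ℝ) 1, 0 ≤ f r) (hε : 0 < ε)
    (hint : IntegrableOn (fun r => f r / r) (Ioc 0 1)) :
    IntegrableOn (fun r => diniRegularization f ε r / r) (Ioc 0 1) := by
  have hmeas : AEStronglyMeasurable (fun r => diniRegularization f ε r / r)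
      (volume.restrict (Ioc 0 1)) :=
    ((aemeasurable_restrict_of_monotoneOn measurableSet_Ioc
      ((monotoneOn_diniRegularization hf hε.le).mono fun _ hr => hr.1.le)).div
      aemeasurable_id).aestronglyMeasurable
  have hpow : IntegrableOn (fun r : ℝ => r ^ (ε / 2 - 1)) (Ioc 0 1) :=
    (intervalIntegrable_iff_integrableOn_Ioc_of_le zero_le_one).mp
      (intervalIntegral.intervalIntegrable_rpow' (by linarith))
  refine Integrable.mono' ((integrableOn_comp_sqrt_div hint).add (hpow.const_mul (f 1))) hmeas
    ((ae_restrict_iff' measurableSet_Ioc).mpr (Filter.Eventually.of_forall fun r hr => ?_))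
  rw [Real.norm_of_nonneg (div_nonneg (diniRegularization_nonneg hf hr.1.le) hr.1.le),
    Pi.add_apply, Real.rpow_sub_one hr.1.ne', mul_div_assoc', ← add_div]
  exact div_le_div_of_nonneg_right (diniRegularization_le_sqrt hf hr) hr.1.le

end

theorem dini_regularization (f : ℝ → ℝ) (ε : ℝ) (hε : ε ∈ Ioo (0:ℝ) 1)
    (hpos : ∀ r ∈ Ioc (0:ℝ) 1, 0 < f r)
    (hmono : MonotoneOn f (Ioc (0:ℝ) 1))
    (hint : IntegrableOn (fun r => f r / r) (Ioc (0:ℝ) 1))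
    (fε : ℝ → ℝ)
    (hfε : ∀ r ∈ Ioc (0:ℝ) 1,
      fε r = sInf ((fun s => f s + f 1 * (r / s) ^ ε) '' Ioc (0:ℝ) 1)) :
    (∀ r ∈ Ioc (0:ℝ) 1, f r ≤ fε r) ∧
      AntitoneOn (fun r => fε r / r ^ ε) (Ioc (0:ℝ) 1) ∧
      IntegrableOn (fun r => fε r / r) (Ioc (0:ℝ) 1) := by
  have hf : ∀ r ∈ Ioc (0:ℝ) 1, 0 ≤ f r := fun r hr => (hpos r hr).le
  have heq : EqOn (diniRegularization f ε) fε (Ioc 0 1) := fun r hr => (hfε r hr).symm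
  refine ⟨fun r hr => heq hr ▸ self_le_diniRegularization hf hmono hε.1.le hr, ?_, ?_⟩
  · exact ((antitoneOn_diniRegularization_div_rpow hf hε.1.le).mono Ioc_subset_Ioi_self).congr
      fun r hr => by simp only [heq hr]
  · exact (integrableOn_diniRegularization_div hf hε.1 hint).congr_fun
      (fun r hr => by simp only [heq hr]) measurableSet_Ioc
end

section
/- Let α ∈ (0,2). The function q ↦ I(q) := ∫₀¹ (t^q − 1)(1 − t^{α−q−1})/(1−t)^{1+α} dt is strictly increasing on [(α−1)/2, α) ∩ [0, α). -/
open MeasureTheory Set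

lemma beta_integrableOn {p r : ℝ} (hp : -1 < p) (hr : -1 < r) :
    IntegrableOn (fun t : ℝ => t ^ p * (1 - t) ^ r) (Ioo (0:ℝ) 1) := by
  have h1 : IntervalIntegrable (fun t : ℝ => t ^ p * (1 - t) ^ r) volume 0 (1/2) := by
    apply (intervalIntegral.intervalIntegrable_rpow' hp).mul_continuousOn
    apply ContinuousOn.rpow_const (by fun_prop)
    intro x hx
    rw [uIcc_of_le (by norm_num)] at hx
    left; nlinarith [hx.2]
  have h2 : IntervalIntegrable (fun s : ℝ => (1 - s) ^ p * s ^ r) volume 0 (1/2) := by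
    apply (intervalIntegral.intervalIntegrable_rpow' hr).continuousOn_mul
    apply ContinuousOn.rpow_const (by fun_prop)
    intro x hx
    rw [uIcc_of_le (by norm_num)] at hx
    left; nlinarith [hx.2]
  have h3 := (h2.comp_sub_left 1).symm
  norm_num at h3
  have i1 : IntegrableOn (fun t : ℝ => t ^ p * (1 - t) ^ r) (Ioc 0 (1/2)) :=
    (intervalIntegrable_iff_integrableOn_Ioc_of_le (by norm_num)).1 h1
  have i2 : IntegrableOn (fun t : ℝ => t ^ p * (1 - t) ^ r) (Ioc (1/2) 1) :=
    (intervalIntegrable_iff_integrableOn_Ioc_of_le (by norm_num)).1 h3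
  exact (i1.union i2).mono_set (by intro x hx; rcases le_or_gt x (1/2) with h | h
                                   · exact Or.inl ⟨hx.1, h⟩
                                   · exact Or.inr ⟨h, hx.2.le⟩)

lemma F_integrableOn {α q : ℝ} (hα1 : 0 < α) (hα2 : α < 2) (hq0 : 0 ≤ q) (hqα : q < α) :
    IntegrableOn
      (fun t : ℝ => (t ^ q - 1) * (1 - t ^ (α - q - 1)) / (1 - t) ^ (1 + α))
      (Ioo (0:ℝ) 1) := by
  set β := α - q - 1 with hβ
  have hβ1 : -1 < β := by simp [hβ]; linarith
  have hβ2 : β ≤ 1 := by simp [hβ]; linarith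
  -- dominating function
  have hG : IntegrableOn
      (fun t : ℝ => max q 1 * ((1:ℝ) * (1 - t) ^ (1 - α) + t ^ β * (1 - t) ^ (1 - α)))
      (Ioo (0:ℝ) 1) := by
    apply Integrable.const_mul
    apply Integrable.add
    · have := beta_integrableOn (p := 0) (r := 1 - α) (by norm_num) (by linarith)
      refine this.congr_fun ?_ measurableSet_Ioo
      intro x hx
      simp
    · exact beta_integrableOn hβ1 (by linarith)
  apply Integrable.mono' hG
  · apply ContinuousOn.aestronglyMeasurable ?_ measurableSet_Ioo
    apply ContinuousOn.div
    · apply ContinuousOn.mul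
      · exact (ContinuousOn.rpow_const continuousOn_id
          (fun x hx => Or.inl (ne_of_gt hx.1))).sub continuousOn_const
      · exact continuousOn_const.sub (ContinuousOn.rpow_const continuousOn_id
          (fun x hx => Or.inl (ne_of_gt hx.1)))
    · exact ContinuousOn.rpow_const (continuousOn_const.sub continuousOn_id)
        (fun x hx => Or.inl (by simp; intro h; nlinarith [hx.2]))
    · intro x hx
      exact ne_of_gt (Real.rpow_pos_of_pos (by linarith [hx.2]) _)
  · filter_upwards [ae_restrict_mem measurableSet_Ioo] with t ht
    obtain ⟨ht0, ht1⟩ := ht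
    have h1t : 0 < 1 - t := by linarith
    have htq : t ^ q ≤ 1 := Real.rpow_le_one ht0.le ht1.le hq0
    have hM : 0 ≤ max q 1 := le_max_of_le_right zero_le_one
    have htβ : 0 < t ^ β := Real.rpow_pos_of_pos ht0 _
    -- bound on 1 - t^q
    have b1 : 1 - t ^ q ≤ max q 1 * (1 - t) := by
      rcases le_or_gt q 1 with h | h
      · have : t ^ (1:ℝ) ≤ t ^ q := Real.rpow_le_rpow_of_exponent_ge ht0 ht1.le h
        rw [Real.rpow_one] at this
        nlinarith [mul_nonneg (sub_nonneg.2 (le_max_right q 1)) h1t.le]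
      · have := one_add_mul_self_le_rpow_one_add (s := t - 1) (by linarith) (p := q) h.le
        have ht' : 1 + (t - 1) = t := by ring
        rw [ht'] at this
        have hqM : q ≤ max q 1 := le_max_left q 1
        nlinarith
    -- bound on |1 - t^β|
    have b2 : |1 - t ^ β| ≤ (1 + t ^ β) * (1 - t) := by
      rcases le_or_gt 0 β with h | h
      · have htβ1 : t ^ β ≤ 1 := Real.rpow_le_one ht0.le ht1.le h
        have : t ^ (1:ℝ) ≤ t ^ β := Real.rpow_le_rpow_of_exponent_ge ht0 ht1.le hβ2
        rw [Real.rpow_one] at this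
        rw [abs_of_nonneg (by linarith)]
        nlinarith
      · have h1β : 1 ≤ t ^ β := Real.one_le_rpow_of_pos_of_le_one_of_nonpos ht0 ht1.le h.le
        have hmb : t ^ (1:ℝ) ≤ t ^ (-β) := Real.rpow_le_rpow_of_exponent_ge ht0 ht1.le (by linarith)
        rw [Real.rpow_one] at hmb
        have hmul : t ^ β * t ^ (-β) = 1 := by
          rw [← Real.rpow_add ht0]; simp
        rw [abs_of_nonpos (by linarith)]
        nlinarith
    have hDpos : 0 < (1 - t) ^ (1 + α) := Real.rpow_pos_of_pos h1t _
    rw [Real.norm_eq_abs, abs_div, abs_of_pos hDpos, div_le_iff₀ hDpos, abs_mul]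
    have key : (1 - t) ^ (1 - α) * (1 - t) ^ (1 + α) = (1 - t) * (1 - t) := by
      rw [← Real.rpow_add h1t]
      norm_num
      ring
    have habs1 : |t ^ q - 1| = 1 - t ^ q := by rw [abs_sub_comm, abs_of_nonneg (by linarith)]
    rw [habs1]
    calc (1 - t ^ q) * |1 - t ^ β| ≤ (max q 1 * (1 - t)) * ((1 + t ^ β) * (1 - t)) := by
          apply mul_le_mul b1 b2 (abs_nonneg _) (by positivity)
      _ = max q 1 * (1 * ((1 - t) * (1 - t)) + t ^ β * ((1 - t) * (1 - t))) := by ring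
      _ = max q 1 * ((1:ℝ) * (1 - t) ^ (1 - α) + t ^ β * (1 - t) ^ (1 - α)) * (1 - t) ^ (1 + α) := by
          rw [← key]; ring

theorem stable_constant_strictMono (α : ℝ) (hα : α ∈ Ioo (0:ℝ) 2) :
    StrictMonoOn
      (fun q => ∫ t in Ioo (0:ℝ) 1, (t ^ q - 1) * (1 - t ^ (α - q - 1)) / (1 - t) ^ (1 + α))
      (Ico (max ((α - 1) / 2) 0) α) := by
  obtain ⟨hα1, hα2⟩ := hα
  intro q₁ hq₁ q₂ hq₂ h12
  obtain ⟨hq₁m, hq₁α⟩ := hq₁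
  obtain ⟨hq₂m, hq₂α⟩ := hq₂
  have hq₁0 : 0 ≤ q₁ := le_trans (le_max_right _ _) hq₁m
  have hq₂0 : 0 ≤ q₂ := le_trans (le_max_right _ _) hq₂m
  have hq₁h : (α - 1) / 2 ≤ q₁ := le_trans (le_max_left _ _) hq₁m
  have int₁ := F_integrableOn hα1 hα2 hq₁0 hq₁α
  have int₂ := F_integrableOn hα1 hα2 hq₂0 hq₂α
  -- pointwise strict inequality
  have key : ∀ t ∈ Ioo (0:ℝ) 1,
      (t ^ q₁ - 1) * (1 - t ^ (α - q₁ - 1)) / (1 - t) ^ (1 + α)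
        < (t ^ q₂ - 1) * (1 - t ^ (α - q₂ - 1)) / (1 - t) ^ (1 + α) := by
    intro t ⟨ht0, ht1⟩
    have h1t : 0 < 1 - t := by linarith
    have hD : 0 < (1 - t) ^ (1 + α) := Real.rpow_pos_of_pos h1t _
    apply div_lt_div_of_pos_right ?_ hD
    have hBA : t ^ q₂ < t ^ q₁ := Real.rpow_lt_rpow_of_exponent_gt ht0 ht1 h12
    have hE : 1 < t ^ (α - 1 - q₁ - q₂) := by
      rw [Real.one_lt_rpow_iff_of_pos ht0]
      right; constructor
      · exact ht1
      · linarith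
    have e1 : t ^ (α - q₁ - 1) = t ^ (α - 1 - q₁ - q₂) * t ^ q₂ := by
      rw [← Real.rpow_add ht0]; ring_nf
    have e2 : t ^ (α - q₂ - 1) = t ^ (α - 1 - q₁ - q₂) * t ^ q₁ := by
      rw [← Real.rpow_add ht0]; ring_nf
    rw [e1, e2]
    nlinarith [mul_pos (sub_pos.2 hBA) (sub_pos.2 hE)]
  simp only
  rw [← sub_pos, ← integral_sub int₂ int₁]
  rw [setIntegral_pos_iff_support_of_nonneg_ae]
  · apply lt_of_lt_of_le (show (0:ENNReal) < volume (Ioo (0:ℝ) 1) by simp)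
    apply measure_mono
    intro t ht
    exact ⟨ne_of_gt (sub_pos.2 (key t ht)), ht⟩
  · filter_upwards [ae_restrict_mem measurableSet_Ioo] with t ht
    exact le_of_lt (sub_pos.2 (key t ht))
  · exact int₂.sub int₁
end
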